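/- arXiv:1304.6574 — 13 statements merged into one kernel-verified Lean document; each statement's English description precedes it below -/
import Mathlib

section
/- Let L be a function from BCCSP processes to a set Λ of local observations and let N be the equivalence relation defined by p N q ⇔ L(p) = L(q). Then for all BCCSP processes p and q: p ⊑_NS q if and only if BGO_L(p) ⊆ BGO_L(q). -/
/-- BCCSP processes over a set `Act` of actions. -/
inductive Proc (Act : Type) : Type where
  | nil : Proc Act
  | pre : Act → Proc Act → Proc Act
  | choice : Proc Act → Proc Act → Proc Act

/-- The transition relation of BCCSP. -/
inductive Proc.Step {Act : Type} : Proc Act → Act → Proc Act → Prop where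
  | pre (a : Act) (p : Proc Act) : Proc.Step (Proc.pre a p) a p
  | left {p p' : Proc Act} {a : Act} (q : Proc Act) :
      Proc.Step p a p' → Proc.Step (Proc.choice p q) a p'
  | right (p : Proc Act) {q q' : Proc Act} {a : Act} :
      Proc.Step q a q' → Proc.Step (Proc.choice p q) a q'

/-- The initial offer of a process. -/
def Proc.initials {Act : Type} (p : Proc Act) : Set Act :=
  {a | ∃ p', Proc.Step p a p'}

/-- `S` is an `N`-constrained simulation. -/
def IsNSim {Act : Type} (N : Proc Act → Proc Act → Prop)
    (S : Proc Act → Proc Act → Prop) : Prop :=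
  ∀ p q, S p q → N p q ∧
    ∀ a p', Proc.Step p a p' → ∃ q', Proc.Step q a q' ∧ S p' q'

/-- `p ⊑_NS q` : `p` is `N`-simulated by `q`. -/
def NSimLe {Act : Type} (N : Proc Act → Proc Act → Prop) (p q : Proc Act) : Prop :=
  ∃ S, IsNSim N S ∧ S p q

/-- Branching general observations: finite trees with nodes labeled in `Λ`
and arcs labeled by actions in `Act`. -/
inductive Obs (Act Λ : Type) : Type where
  | node : Λ → List (Act × Obs Act Λ) → Obs Act Λ

/-- Membership `b ∈ BGO_L(p)`:
`BGO_L(p) = {⟨L(p), S⟩ | S ⊆ {(a, b) | p →a p', b ∈ BGO_L(p')}}`. -/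
def InBGO {Act Λ : Type} (L : Proc Act → Λ) : Obs Act Λ → Proc Act → Prop
  | Obs.node l S, p =>
      l = L p ∧ ∀ a b, (a, b) ∈ S → ∃ p', Proc.Step p a p' ∧ InBGO L b p'
termination_by b _ => sizeOf b
decreasing_by
  have h1 : sizeOf (a, b) < sizeOf S := List.sizeOf_lt_of_mem (by assumption)
  simp at h1 ⊢
  omega

/-! `N`-constrained simulation is transported to observations by induction on the observation
tree, so `p ⊑_NS q` gives `BGO_L(p) ⊆ BGO_L(q)`. Conversely, inclusion of observation sets is
itself an `N`-constrained simulation: the leaf `⟨L p, []⟩` forces `L p = L q`, and if a step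
`p →a p'` had no matching `q →a q'`, then, as `q` has only finitely many `a`-derivatives, the
observations separating `p'` from each of them merge into one `b ∈ BGO_L(p')`; the observation
`⟨L p, [(a, b)]⟩` of `p` would then not be one of `q`. -/

namespace Proc

variable {Act : Type}

theorem finite_setOf_step (q : Proc Act) (a : Act) : {q' | Step q a q'}.Finite := by
  induction q with
  | nil => exact Set.finite_empty.subset (by rintro _ ⟨⟩)
  | pre b r => exact (Set.finite_singleton r).subset (by rintro _ ⟨⟩; rfl)
  | choice r s ihr ihs =>
    refine (ihr.union ihs).subset fun q' h => ?_
    cases h with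
    | left _ h => exact .inl h
    | right _ h => exact .inr h

end Proc

section InBGO

variable {Act Λ : Type} {L : Proc Act → Λ}

@[simp]
theorem inBGO_node {l : Λ} {S : List (Act × Obs Act Λ)} {p : Proc Act} :
    InBGO L (.node l S) p ↔
      l = L p ∧ ∀ a b, (a, b) ∈ S → ∃ p', Proc.Step p a p' ∧ InBGO L b p' := by
  rw [InBGO]

theorem inBGO_node_append {l : Λ} {S T : List (Act × Obs Act Λ)} {p : Proc Act} :
    InBGO L (.node l (S ++ T)) p ↔ InBGO L (.node l S) p ∧ InBGO L (.node l T) p := by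
  simp only [inBGO_node, List.mem_append]
  grind

theorem InBGO.of_isNSim {N : Proc Act → Proc Act → Prop} {S : Proc Act → Proc Act → Prop}
    (hS : IsNSim N S) (hNL : ∀ p q, N p q → L p = L q) :
    ∀ (b : Obs Act Λ) {p q : Proc Act}, S p q → InBGO L b p → InBGO L b q
  | .node l T, p, q, hpq, hb => by
    obtain ⟨hNpq, hsim⟩ := hS p q hpq
    rw [inBGO_node] at hb ⊢
    refine ⟨hb.1.trans (hNL p q hNpq), fun a b hab => ?_⟩
    obtain ⟨p', hp', hb'⟩ := hb.2 a b hab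
    obtain ⟨q', hq', hpq'⟩ := hsim a p' hp'
    exact ⟨q', hq', InBGO.of_isNSim hS hNL b hpq' hb'⟩
termination_by b => b
decreasing_by
  have := List.sizeOf_lt_of_mem hab
  simp only [Prod.mk.sizeOf_spec, sizeOf_default, add_zero, Obs.node.sizeOf_spec] at this ⊢
  omega

theorem exists_inBGO_forall_not_inBGO (p : Proc Act) {s : Set (Proc Act)} (hs : s.Finite)
    (hsep : ∀ q ∈ s, ∃ b, InBGO L b p ∧ ¬ InBGO L b q) :
    ∃ b, InBGO L b p ∧ ∀ q ∈ s, ¬ InBGO L b q := by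
  induction s, hs using Set.Finite.induction_on with
  | empty => exact ⟨.node (L p) [], by simp, fun _ => False.elim⟩
  | @insert q s _ _ ih =>
    obtain ⟨⟨l, T⟩, hb, hbq⟩ := hsep q (s.mem_insert q)
    obtain ⟨⟨l', T'⟩, hb', hbs⟩ := ih fun r hr => hsep r (s.mem_insert_of_mem q hr)
    obtain rfl : l = L p := (inBGO_node.mp hb).1
    obtain rfl : l' = L p := (inBGO_node.mp hb').1
    refine ⟨.node (L p) (T ++ T'), inBGO_node_append.mpr ⟨hb, hb'⟩, ?_⟩
    rintro r (rfl | hr) hr'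
    exacts [hbq (inBGO_node_append.mp hr').1, hbs r hr (inBGO_node_append.mp hr').2]

theorem isNSim_setOf_inBGO_subset {N : Proc Act → Proc Act → Prop}
    (hLN : ∀ p q, L p = L q → N p q) :
    IsNSim N fun p q => {b | InBGO L b p} ⊆ {b | InBGO L b q} := by
  intro p q hpq
  have hleaf : InBGO L (.node (L p) []) p := by simp
  refine ⟨hLN p q (inBGO_node.mp (hpq hleaf)).1, fun a p' hp' => ?_⟩
  by_contra! hnone
  obtain ⟨b, hb, hbq⟩ := exists_inBGO_forall_not_inBGO p' (q.finite_setOf_step a)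
    fun q' hq' => Set.not_subset.mp (hnone q' hq')
  have hpb : InBGO L (.node (L p) [(a, b)]) p := by simpa using ⟨p', hp', hb⟩
  obtain ⟨q', hq', hq'b⟩ := (inBGO_node.mp (hpq hpb)).2 a b (by simp)
  exact hbq q' hq' hq'b

end InBGO

/-- with `N` the kernel of the local observation function `L`,
`p ⊑_NS q` iff `BGO_L(p) ⊆ BGO_L(q)`. -/
theorem stmt0 {Act Λ : Type} (L : Proc Act → Λ) (N : Proc Act → Proc Act → Prop)
    (hN : ∀ p q, N p q ↔ L p = L q) (p q : Proc Act) :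
    NSimLe N p q ↔ {b | InBGO L b p} ⊆ {b | InBGO L b q} :=
  ⟨fun ⟨_, hS, hpq⟩ _ hb => InBGO.of_isNSim hS (fun p q => (hN p q).mp) _ hpq hb,
    fun h => ⟨_, isNSim_setOf_inBGO_subset fun p q => (hN p q).mpr, h⟩⟩
end

section
/- For all BCCSP processes p and q: BGO_I(p) ⊆ BGO_I(p + q) if and only if I(q) ⊆ I(p). -/
/-- `BGO_I(p) ⊆ BGO_I(p + q)` iff `I(q) ⊆ I(p)`. -/
theorem stmt2 {Act : Type} (p q : Proc Act) :
    {b | InBGO Proc.initials b p} ⊆ {b | InBGO Proc.initials b (Proc.choice p q)} ↔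
      Proc.initials q ⊆ Proc.initials p := by
  have hIeq : Proc.initials q ⊆ Proc.initials p →
      Proc.initials (Proc.choice p q) = Proc.initials p := by
    intro h
    ext a
    constructor
    · rintro ⟨p', hp'⟩
      cases hp' with
      | left _ hs => exact ⟨_, hs⟩
      | right _ hs => exact h ⟨_, hs⟩
    · rintro ⟨p', hp'⟩
      exact ⟨p', Proc.Step.left q hp'⟩
  constructor
  · intro h a ha
    obtain ⟨q', hq⟩ := ha
    have hm : InBGO Proc.initials (Obs.node (Proc.initials p) []) p := by
      rw [InBGO]
      refine ⟨rfl, ?_⟩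
      intro a b hab
      simp at hab
    have h2 := h hm
    rw [Set.mem_setOf_eq, InBGO] at h2
    obtain ⟨hl, -⟩ := h2
    rw [hl]
    exact ⟨q', Proc.Step.right p hq⟩
  · intro h b hb
    cases b with
    | node l S =>
      rw [Set.mem_setOf_eq, InBGO] at hb
      rw [Set.mem_setOf_eq, InBGO]
      obtain ⟨hl, hS⟩ := hb
      refine ⟨by rw [hl, hIeq h], ?_⟩
      intro a b hab
      obtain ⟨p', hs, hb'⟩ := hS a b hab
      exact ⟨p', Proc.Step.left q hs, hb'⟩
end

section
/- Let L be a function from BCCSP processes to a set Λ of local observations and let N be the equivalence relation defined by p N q ⇔ L(p) = L(q). If p ⊑_NS q then LGO_L(p) ⊆ LGO_L(q). -/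
/-- A linear general observation `l₀ a₁ l₁ … aₙ lₙ` is encoded as the pair of
its initial label `l₀` and the list `[(a₁,l₁),…,(aₙ,lₙ)]`. -/
abbrev LObs (Act Λ : Type) : Type := Λ × List (Act × Λ)

/-- Membership `o ∈ LGO_L(p)`: `⟨L(p)⟩ ∈ LGO_L(p)`, and
`⟨L(p), a⟩ ∘ t ∈ LGO_L(p)` whenever `p →a p'` and `t ∈ LGO_L(p')`. -/
inductive InLGO {Act Λ : Type} (L : Proc Act → Λ) : LObs Act Λ → Proc Act → Prop where
  | nil (p : Proc Act) : InLGO L (L p, []) p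
  | cons {p p' : Proc Act} {a : Act} {t : LObs Act Λ} :
      Proc.Step p a p' → InLGO L t p' → InLGO L (L p, (a, t.1) :: t.2) p

/-- The sequence of actions `a₁ … aₙ` of a linear observation. -/
def obsActs {Act Λ : Type} (o : LObs Act Λ) : List Act := o.2.map Prod.fst

/-- The final local observation `lₙ` of a linear observation. -/
def obsFinal {Act Λ : Type} (o : LObs Act Λ) : Λ := (o.2.map Prod.snd).getLastD o.1

/-- with `N` the kernel of `L`, `p ⊑_NS q` implies
`LGO_L(p) ⊆ LGO_L(q)`. -/
theorem stmt3 {Act Λ : Type} (L : Proc Act → Λ) (N : Proc Act → Proc Act → Prop)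
    (hN : ∀ p q, N p q ↔ L p = L q) (p q : Proc Act) :
    NSimLe N p q → {o | InLGO L o p} ⊆ {o | InLGO L o q} := by
  rintro ⟨S, hS, hpq⟩ o ho
  induction ho generalizing q with
  | nil p =>
    have := ((hN p q).mp (hS p q hpq).1)
    simpa [this] using InLGO.nil (L := L) q
  | cons hstep _ ih =>
    rename_i p p' a t _
    obtain ⟨q', hq', hS'⟩ := (hS p q hpq).2 a p' hstep
    have hL := (hN p q).mp (hS p q hpq).1
    have := InLGO.cons hq' (ih q' hS')
    simpa [hL] using this
end

section
/- For all BCCSP processes p and q: Failures(p) ⊆ Failures(q) if and only if LGO_I(p) ≤^{lf⊇} LGO_I(q), i.e. if and only if for every X0a1X1…anXn ∈ LGO_I(p) there exists Y0a1Y1…anYn ∈ LGO_I(q) with Xn ⊇ Yn. -/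
/-- Multi-step transitions: `p ⇒α q`. -/
inductive Proc.Steps {Act : Type} : Proc Act → List Act → Proc Act → Prop where
  | refl (p : Proc Act) : Proc.Steps p [] p
  | cons {p p' p'' : Proc Act} {a : Act} {α : List Act} :
      Proc.Step p a p' → Proc.Steps p' α p'' → Proc.Steps p (a :: α) p''

/-- The failures of `p`: pairs `⟨α, X⟩` with `p ⇒α p'` and `I(p') ∩ X = ∅`. -/
def failures {Act : Type} (p : Proc Act) : Set (List Act × Set Act) :=
  {f | ∃ p', Proc.Steps p f.1 p' ∧ Proc.initials p' ∩ f.2 = ∅}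

theorem inLGO_to_steps {Act : Type} {o : LObs Act (Set Act)} {p : Proc Act}
    (h : InLGO Proc.initials o p) :
    ∃ p', Proc.Steps p (obsActs o) p' ∧ obsFinal o = Proc.initials p' := by
  induction h with
  | nil p => exact ⟨p, Proc.Steps.refl p, rfl⟩
  | cons hs _ ih =>
    obtain ⟨p'', hst, hf⟩ := ih
    refine ⟨p'', Proc.Steps.cons hs hst, ?_⟩
    simp only [obsFinal, List.map_cons, List.getLastD_cons]; exact hf

theorem steps_to_inLGO {Act : Type} {α : List Act} {p p' : Proc Act}
    (h : Proc.Steps p α p') :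
    ∃ o, InLGO Proc.initials o p ∧ obsActs o = α ∧ obsFinal o = Proc.initials p' := by
  induction h with
  | refl p => exact ⟨(Proc.initials p, []), InLGO.nil p, rfl, rfl⟩
  | cons hs _ ih =>
    obtain ⟨t, ht, hacts, hf⟩ := ih
    refine ⟨(Proc.initials _, (_, t.1) :: t.2), InLGO.cons hs ht, ?_, ?_⟩
    · simp [obsActs] at hacts ⊢; exact hacts
    · simp only [obsFinal, List.map_cons, List.getLastD_cons]; exact hf

/-- `Failures(p) ⊆ Failures(q)` iff `LGO_I(p) ≤^{lf⊇} LGO_I(q)`. -/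
theorem stmt4 {Act : Type} (p q : Proc Act) :
    failures p ⊆ failures q ↔
      ∀ o, InLGO Proc.initials o p →
        ∃ o', InLGO Proc.initials o' q ∧ obsActs o' = obsActs o ∧
          obsFinal o' ⊆ obsFinal o := by
  constructor
  · intro h o ho
    obtain ⟨p', hst, hf⟩ := inLGO_to_steps ho
    have hfail : (obsActs o, (Proc.initials p')ᶜ) ∈ failures p :=
      ⟨p', hst, Set.inter_compl_self _⟩
    obtain ⟨q', hqst, hq⟩ := h hfail
    obtain ⟨o', ho', hacts, hfin⟩ := steps_to_inLGO hqst
    refine ⟨o', ho', hacts, ?_⟩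
    rw [hfin, hf]
    intro x hx
    by_contra hc
    exact absurd (Set.eq_empty_iff_forall_notMem.mp hq x ⟨hx, hc⟩) (fun h => h)
  · rintro h ⟨α, X⟩ ⟨p', hst, hdisj⟩
    obtain ⟨o, ho, hacts, hf⟩ := steps_to_inLGO hst
    obtain ⟨o', ho', hacts', hsub⟩ := h o ho
    obtain ⟨q', hqst, hqf⟩ := inLGO_to_steps ho'
    refine ⟨q', by rwa [hacts', hacts] at hqst, ?_⟩
    rw [← hqf]
    apply Set.eq_empty_of_subset_empty
    intro x ⟨hx1, hx2⟩
    rw [hf] at hsub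
    exact Set.eq_empty_iff_forall_notMem.mp hdisj x ⟨hsub hx1, hx2⟩
end

section
/- For all BCCSP processes p and q: FailureTraces(p) ⊆ FailureTraces(q) if and only if LGO_I(p) ≤^{l⊇} LGO_I(q), i.e. if and only if for every X0a1X1…anXn ∈ LGO_I(p) there exists Y0a1Y1…anYn ∈ LGO_I(q) with Xi ⊇ Yi for all i ∈ 0..n. -/
/-- `o` is a failure trace of `p`: `o = X₀a₁X₁…aₙXₙ` and there is a path
`p = p₀ →a₁ p₁ ⋯ →aₙ pₙ` with `Xᵢ ∩ I(pᵢ) = ∅` for all `i`. -/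
inductive IsFTrace {Act : Type} : LObs Act (Set Act) → Proc Act → Prop where
  | nil {p : Proc Act} {X : Set Act} :
      X ∩ Proc.initials p = ∅ → IsFTrace (X, []) p
  | cons {p p' : Proc Act} {a : Act} {X : Set Act} {t : LObs Act (Set Act)} :
      X ∩ Proc.initials p = ∅ → Proc.Step p a p' → IsFTrace t p' →
      IsFTrace (X, (a, t.1) :: t.2) p

/-- The pointwise order on linear observations over `Set Act`:
same action sequence and `Xᵢ ⊇ Yᵢ` at every position. -/
def obsGe {Act : Type} (o o' : LObs Act (Set Act)) : Prop :=
  o'.1 ⊆ o.1 ∧ List.Forall₂ (fun x y => x.1 = y.1 ∧ y.2 ⊆ x.2) o.2 o'.2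

lemma lgo_compl {Act : Type} {o : LObs Act (Set Act)} {p : Proc Act}
    (h : InLGO Proc.initials o p) :
    IsFTrace (o.1ᶜ, o.2.map (fun al => (al.1, al.2ᶜ))) p := by
  induction h with
  | nil p => exact IsFTrace.nil (by simp)
  | cons hs ht ih => exact IsFTrace.cons (by simp) hs ih

lemma ftrace_to_lgo {Act : Type} {ft : LObs Act (Set Act)} {p : Proc Act}
    (h : IsFTrace ft p) :
    ∃ o, InLGO Proc.initials o p ∧ ft.1 ∩ o.1 = ∅ ∧
      List.Forall₂ (fun x y => x.1 = y.1 ∧ x.2 ∩ y.2 = ∅) ft.2 o.2 := by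
  induction h with
  | nil hX => exact ⟨(Proc.initials _, []), InLGO.nil _, hX, List.Forall₂.nil⟩
  | cons hX hs ht ih =>
      obtain ⟨o, ho, h1, h2⟩ := ih
      exact ⟨(Proc.initials _, (_, o.1) :: o.2), InLGO.cons hs ho, hX,
        List.Forall₂.cons ⟨rfl, h1⟩ h2⟩

lemma lgo_to_ftrace {Act : Type} {o : LObs Act (Set Act)} {p : Proc Act}
    (h : InLGO Proc.initials o p) :
    ∀ ft : LObs Act (Set Act), ft.1 ∩ o.1 = ∅ →
      List.Forall₂ (fun x y => x.1 = y.1 ∧ x.2 ∩ y.2 = ∅) ft.2 o.2 →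
      IsFTrace ft p := by
  induction h with
  | nil p =>
      rintro ⟨X, l⟩ h1 h2
      cases h2
      exact IsFTrace.nil h1
  | cons hs ht ih =>
      rintro ⟨X, l⟩ h1 h2
      cases h2 with
      | cons hxy hrest =>
        rename_i x rest
        obtain ⟨xa, xX⟩ := x
        obtain ⟨he, hd⟩ := hxy
        simp only at he hd
        subst he
        exact IsFTrace.cons h1 hs (ih (xX, rest) hd hrest)

lemma forall2_trans {α β γ : Type*} {r : α → β → Prop} {s : β → γ → Prop}
    {t : α → γ → Prop} (h : ∀ a b c, r a b → s b c → t a c) :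
    ∀ {l1 : List α} {l2 : List β} {l3 : List γ},
      List.Forall₂ r l1 l2 → List.Forall₂ s l2 l3 → List.Forall₂ t l1 l3 := by
  intro l1 l2 l3 h12 h23
  induction h12 generalizing l3 with
  | nil => cases h23; exact List.Forall₂.nil
  | cons hab hrest ih =>
      rcases h23 with - | ⟨hbc, hrest'⟩
      exact List.Forall₂.cons (h _ _ _ hab hbc) (ih hrest')

/-- `FailureTraces(p) ⊆ FailureTraces(q)` iff
`LGO_I(p) ≤^{l⊇} LGO_I(q)`. -/
theorem stmt5 {Act : Type} (p q : Proc Act) :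
    {ft | IsFTrace ft p} ⊆ {ft | IsFTrace ft q} ↔
      ∀ o, InLGO Proc.initials o p →
        ∃ o', InLGO Proc.initials o' q ∧ obsGe o o' := by
  constructor
  · intro h o ho
    have hft := h (lgo_compl ho)
    obtain ⟨o', ho', h1, h2⟩ := ftrace_to_lgo hft
    refine ⟨o', ho', ?_, ?_⟩
    · intro x hx
      by_contra hxo
      exact absurd h1 (Set.nonempty_iff_ne_empty.mp ⟨x, hxo, hx⟩)
    · rw [List.forall₂_map_left_iff] at h2
      refine h2.imp ?_
      rintro ⟨a, X⟩ ⟨b, Y⟩ ⟨he, hd⟩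
      refine ⟨he, fun x hx => ?_⟩
      by_contra hxX
      exact absurd hd (Set.nonempty_iff_ne_empty.mp ⟨x, hxX, hx⟩)
  · intro h ft hft
    obtain ⟨o, ho, h1, h2⟩ := ftrace_to_lgo hft
    obtain ⟨o', ho', hsub, hfa⟩ := h o ho
    refine lgo_to_ftrace ho' ft ?_ ?_
    · apply Set.eq_empty_of_subset_empty
      intro x hx
      exact h1 ▸ (⟨hx.1, hsub hx.2⟩ : x ∈ ft.1 ∩ o.1)
    · refine forall2_trans ?_ h2 hfa
      rintro ⟨a, X⟩ ⟨b, Y⟩ ⟨c, Z⟩ ⟨he, hd⟩ ⟨he', hs⟩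
      refine ⟨he.trans he', ?_⟩
      apply Set.eq_empty_of_subset_empty
      intro x hx
      exact hd ▸ (⟨hx.1, hs hx.2⟩ : x ∈ X ∩ Y)
end

section
/- Let LGO_T be the linear general observations for the local observer L_T(p) = T(p) (the set of traces of p). Then for all BCCSP processes p and q: (1) LGO_T(p) ≤^{lf} LGO_T(q) (for every T0a1…anTn ∈ LGO_T(p) there is S0a1…anSn ∈ LGO_T(q) with Sn = Tn) if and only if p ⊑_PF q, where p ⊑_PF q means: for every α ∈ Act* and every p ⇒α p' there exists q ⇒α q' with T(q') = T(p'); and (2) LGO_T(p) ≤^{lf⊇} LGO_T(q) (with final condition Tn ⊇ Sn) if and only if p ⊑_IF q, where p ⊑_IF q means: for every S ⊆ Act*, every α ∈ Act* and every p ⇒α p' with T(p') ∩ S = ∅ there exists q ⇒α q' with T(q') ∩ S = ∅. -/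
/-- The set of traces of `p`. -/
def Proc.traces {Act : Type} (p : Proc Act) : Set (List Act) :=
  {α | ∃ q, Proc.Steps p α q}

/-- The possible futures preorder `p ⊑_PF q`. -/
def PFle {Act : Type} (p q : Proc Act) : Prop :=
  ∀ (α : List Act) (p' : Proc Act), Proc.Steps p α p' →
    ∃ q', Proc.Steps q α q' ∧ Proc.traces q' = Proc.traces p'

/-- The impossible futures preorder `p ⊑_IF q`. -/
def IFle {Act : Type} (p q : Proc Act) : Prop :=
  ∀ (S : Set (List Act)) (α : List Act) (p' : Proc Act),
    Proc.Steps p α p' → Proc.traces p' ∩ S = ∅ →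
      ∃ q', Proc.Steps q α q' ∧ Proc.traces q' ∩ S = ∅

lemma lgo_to_steps {Act : Type} {o : LObs Act (Set (List Act))} {p : Proc Act}
    (h : InLGO Proc.traces o p) :
    ∃ p', Proc.Steps p (obsActs o) p' ∧ obsFinal o = Proc.traces p' := by
  induction h with
  | nil p => exact ⟨p, Proc.Steps.refl p, rfl⟩
  | cons hs _ ih =>
    obtain ⟨p'', hsteps, hfin⟩ := ih
    refine ⟨p'', Proc.Steps.cons hs hsteps, ?_⟩
    simpa only [obsFinal, List.map_cons, List.getLastD_cons] using hfin

lemma steps_to_lgo {Act : Type} {p p' : Proc Act} {α : List Act}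
    (h : Proc.Steps p α p') :
    ∃ o : LObs Act (Set (List Act)), InLGO Proc.traces o p ∧ obsActs o = α ∧
      obsFinal o = Proc.traces p' := by
  induction h with
  | refl p => exact ⟨(Proc.traces p, []), InLGO.nil p, rfl, rfl⟩
  | cons hs _ ih =>
    obtain ⟨t, ht, hacts, hfin⟩ := ih
    refine ⟨(Proc.traces _, (_, t.1) :: t.2), InLGO.cons hs ht, ?_, ?_⟩
    · simp [obsActs] at hacts ⊢; exact hacts
    · simpa only [obsFinal, List.map_cons, List.getLastD_cons] using hfin

/-- for the local observer `L_T(p) = T(p)`,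
(1) `LGO_T(p) ≤^{lf} LGO_T(q)` iff `p ⊑_PF q`, and
(2) `LGO_T(p) ≤^{lf⊇} LGO_T(q)` iff `p ⊑_IF q`. -/
theorem stmt8 {Act : Type} (p q : Proc Act) :
    ((∀ o, InLGO Proc.traces o p →
        ∃ o', InLGO Proc.traces o' q ∧ obsActs o' = obsActs o ∧
          obsFinal o' = obsFinal o) ↔ PFle p q) ∧
    ((∀ o, InLGO Proc.traces o p →
        ∃ o', InLGO Proc.traces o' q ∧ obsActs o' = obsActs o ∧
          obsFinal o' ⊆ obsFinal o) ↔ IFle p q) := by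
  constructor
  · constructor
    · intro h α p' hsteps
      obtain ⟨o, ho, hacts, hfin⟩ := steps_to_lgo hsteps
      obtain ⟨o', ho', hacts', hfin'⟩ := h o ho
      obtain ⟨q', hq', hq'fin⟩ := lgo_to_steps ho'
      exact ⟨q', by rwa [hacts', hacts] at hq', by rw [← hq'fin, hfin', hfin]⟩
    · intro h o ho
      obtain ⟨p', hp', hpfin⟩ := lgo_to_steps ho
      obtain ⟨q', hq', hq'tr⟩ := h _ _ hp'
      obtain ⟨o', ho', hacts', hfin'⟩ := steps_to_lgo hq'
      exact ⟨o', ho', hacts', by rw [hfin', hq'tr, ← hpfin]⟩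
  · constructor
    · intro h S α p' hsteps hdisj
      obtain ⟨o, ho, hacts, hfin⟩ := steps_to_lgo hsteps
      obtain ⟨o', ho', hacts', hfin'⟩ := h o ho
      obtain ⟨q', hq', hq'fin⟩ := lgo_to_steps ho'
      refine ⟨q', by rwa [hacts', hacts] at hq', ?_⟩
      rw [← hq'fin]
      apply Set.eq_empty_of_subset_empty
      rw [← hdisj, ← hfin]
      exact Set.inter_subset_inter_left _ hfin'
    · intro h o ho
      obtain ⟨p', hp', hpfin⟩ := lgo_to_steps ho
      obtain ⟨q', hq', hq'disj⟩ := h (Proc.traces p')ᶜ _ _ hp'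
        (by simp [Set.inter_compl_self])
      obtain ⟨o', ho', hacts', hfin'⟩ := steps_to_lgo hq'
      refine ⟨o', ho', hacts', ?_⟩
      rw [hfin', hpfin]
      intro x hx
      by_contra hc
      exact Set.eq_empty_iff_forall_notMem.mp hq'disj x ⟨hx, hc⟩
end

section
/- For every BCCSP process p and every q ∈ PW(p) (i.e. q deterministic with q ⊑_RS p), the universal complete deterministic branching observation cdbgo(q) belongs to cdBGO_I(p). -/
/-- A process is deterministic if at every reachable state, the `a`-derivative
is unique (for each action `a`). -/
def Deterministic {Act : Type} (p : Proc Act) : Prop :=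
  ∀ (α : List Act) (r : Proc Act), Proc.Steps p α r →
    ∀ (a : Act) (r₁ r₂ : Proc Act), Proc.Step r a r₁ → Proc.Step r a r₂ → r₁ = r₂

/-- `S` is a ready simulation. -/
def IsReadySim {Act : Type} (S : Proc Act → Proc Act → Prop) : Prop :=
  ∀ p q, S p q → Proc.initials p = Proc.initials q ∧
    ∀ a p', Proc.Step p a p' → ∃ q', Proc.Step q a q' ∧ S p' q'

/-- The ready simulation preorder `p ⊑_RS q`. -/
def RSle {Act : Type} (p q : Proc Act) : Prop :=
  ∃ S, IsReadySim S ∧ S p q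

/-- The set of possible worlds of `p`. -/
def PW {Act : Type} (p : Proc Act) : Set (Proc Act) :=
  {q | Deterministic q ∧ RSle q p}

/-- A branching observation is deterministic if at every node no two
outgoing arcs carry the same action. -/
def DetObs {Act Λ : Type} : Obs Act Λ → Prop
  | Obs.node _ S =>
      (∀ x ∈ S, ∀ y ∈ S, x.1 = y.1 → x.2 = y.2) ∧
      ∀ a b, (a, b) ∈ S → DetObs b
termination_by b => sizeOf b
decreasing_by
  have h1 : sizeOf (a, b) < sizeOf S := List.sizeOf_lt_of_mem (by assumption)
  simp at h1 ⊢
  omega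

/-- A branching observation (labeled by offers) is complete if every node
labeled `A` has, for each `a ∈ A`, an outgoing arc labeled `a`. -/
def CompleteObs {Act : Type} : Obs Act (Set Act) → Prop
  | Obs.node A S =>
      (∀ a ∈ A, ∃ b, (a, b) ∈ S) ∧
      ∀ a b, (a, b) ∈ S → CompleteObs b
termination_by b => sizeOf b
decreasing_by
  have h1 : sizeOf (a, b) < sizeOf S := List.sizeOf_lt_of_mem (by assumption)
  simp at h1 ⊢
  omega

/-- `b` is the universal complete deterministic branching observation of `q`:
`cdbgo(q) = ⟨I(q), {(a, cdbgo(q_a)) | a ∈ I(q)}⟩`. -/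
def IsCdbgo {Act : Type} : Obs Act (Set Act) → Proc Act → Prop
  | Obs.node l S, q =>
      l = Proc.initials q ∧
      (∀ a ∈ Proc.initials q, ∃ b, (a, b) ∈ S) ∧
      (∀ a b, (a, b) ∈ S → ∃ q', Proc.Step q a q' ∧ IsCdbgo b q') ∧
      (∀ x ∈ S, ∀ y ∈ S, x.1 = y.1 → x.2 = y.2)
termination_by b _ => sizeOf b
decreasing_by
  have h1 : sizeOf (a, b) < sizeOf S := List.sizeOf_lt_of_mem (by assumption)
  simp at h1 ⊢
  omega

theorem detObs_of_cdbgo {Act : Type} : ∀ (b : Obs Act (Set Act)) (q : Proc Act),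
    IsCdbgo b q → DetObs b
  | Obs.node l S, q => by
    intro h
    rw [IsCdbgo] at h
    rw [DetObs]
    refine ⟨h.2.2.2, ?_⟩
    intro a b hab
    obtain ⟨q', _, hc⟩ := h.2.2.1 a b hab
    exact detObs_of_cdbgo b q' hc
termination_by b _ => sizeOf b
decreasing_by
  have h1 : sizeOf (a, b) < sizeOf S := List.sizeOf_lt_of_mem (by assumption)
  simp at h1 ⊢
  omega

theorem completeObs_of_cdbgo {Act : Type} : ∀ (b : Obs Act (Set Act)) (q : Proc Act),
    IsCdbgo b q → CompleteObs b
  | Obs.node l S, q => by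
    intro h
    rw [IsCdbgo] at h
    rw [CompleteObs]
    constructor
    · intro a ha
      exact h.2.1 a (h.1 ▸ ha)
    · intro a b hab
      obtain ⟨q', _, hc⟩ := h.2.2.1 a b hab
      exact completeObs_of_cdbgo b q' hc
termination_by b _ => sizeOf b
decreasing_by
  have h1 : sizeOf (a, b) < sizeOf S := List.sizeOf_lt_of_mem (by assumption)
  simp at h1 ⊢
  omega

theorem inBGO_of_cdbgo {Act : Type} (R : Proc Act → Proc Act → Prop)
    (hR : IsReadySim R) : ∀ (b : Obs Act (Set Act)) (q p : Proc Act),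
    IsCdbgo b q → R q p → InBGO Proc.initials b p
  | Obs.node l S, q, p => by
    intro h hqp
    rw [IsCdbgo] at h
    rw [InBGO]
    obtain ⟨hinit, hmatch⟩ := hR q p hqp
    constructor
    · rw [h.1, hinit]
    · intro a b hab
      obtain ⟨q', hstep, hc⟩ := h.2.2.1 a b hab
      obtain ⟨p', hp', hR'⟩ := hmatch a q' hstep
      exact ⟨p', hp', inBGO_of_cdbgo R hR b q' p' hc hR'⟩
termination_by b _ _ => sizeOf b
decreasing_by
  have h1 : sizeOf (a, b) < sizeOf S := List.sizeOf_lt_of_mem (by assumption)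
  simp at h1 ⊢
  omega

/-- for every `q ∈ PW(p)`, `cdbgo(q) ∈ cdBGO_I(p)`. -/
theorem stmt9 {Act : Type} (p q : Proc Act) (hq : q ∈ PW p)
    (b : Obs Act (Set Act)) (hb : IsCdbgo b q) :
    InBGO Proc.initials b p ∧ DetObs b ∧ CompleteObs b := by
  obtain ⟨_, R, hR, hqp⟩ := hq
  exact ⟨inBGO_of_cdbgo R hR b q p hb hqp, detObs_of_cdbgo b q hb,
    completeObs_of_cdbgo b q hb⟩
end

section
/- For every BCCSP process p and every deterministic process q such that cdbgo(q) ∈ cdBGO_I(p), we have q ⊑_RS p (so q ∈ PW(p)). -/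
lemma det_step {Act : Type} {q q' : Proc Act} {a : Act}
    (hq : Deterministic q) (h : Proc.Step q a q') : Deterministic q' := by
  intro α r hr
  exact hq (a :: α) r (Proc.Steps.cons h hr)

/-- for every process `p` and every deterministic process `q`
with `cdbgo(q) ∈ cdBGO_I(p)`, we have `q ⊑_RS p` (hence `q ∈ PW(p)`). -/
theorem stmt10 {Act : Type} (p q : Proc Act) (hq : Deterministic q)
    (b : Obs Act (Set Act)) (hb : IsCdbgo b q)
    (hmem : InBGO Proc.initials b p ∧ DetObs b ∧ CompleteObs b) :
    RSle q p := by
  refine ⟨fun q p => Deterministic q ∧ ∃ b, IsCdbgo b q ∧ InBGO Proc.initials b p,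
    ?_, hq, b, hb, hmem.1⟩
  rintro q p ⟨hdet, ⟨lq, S⟩, hcd, hin⟩
  rw [IsCdbgo] at hcd
  rw [InBGO] at hin
  obtain ⟨hl, hcomp, hstep, hdetS⟩ := hcd
  obtain ⟨hl', hin⟩ := hin
  constructor
  · rw [← hl', hl]
  · intro a q' hq'
    have ha : a ∈ Proc.initials q := ⟨q', hq'⟩
    obtain ⟨b', hb'⟩ := hcomp a ha
    obtain ⟨q'', hq'', hcd'⟩ := hstep a b' hb'
    obtain ⟨p', hp', hin'⟩ := hin a b' hb'
    have : q'' = q' := hdet [] q (Proc.Steps.refl q) a q'' q' hq'' hq'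
    subst this
    exact ⟨p', hp', det_step hdet hq', b', hcd', hin'⟩
end

section
/- For all BCCSP processes p1 and p2: p1 ⊑_PW p2 (i.e. PW(p1) ⊆ PW(p2)) if and only if dBGO_I(p1) ⊆ dBGO_I(p2). -/
/-! A deterministic observation `b ∈ dBGO_I(p₁)` can be realised inside a possible world of `p₁`:
resolve every initial action of `p₁` by one derivative, taken along `b` where `b` has an arc
for that action (there is at most one, since `b` is deterministic) and arbitrary otherwise, and
recurse. That world lies in `PW(p₂)`, and `BGO_I` is monotone under `⊑_RS`, so
`b ∈ BGO_I(p₂)`. Conversely a deterministic process `q` is described up to `⊑_RS` by its full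
unfolding `charObs q ∈ dBGO_I(q)`: every process having this observation ready-simulates `q`. -/

namespace Proc

variable {Act : Type}

def menu : Proc Act → List (Act × Proc Act)
  | nil => []
  | pre a p => [(a, p)]
  | choice p q => p.menu ++ q.menu

theorem step_iff_mem_menu {p p' : Proc Act} {a : Act} : Step p a p' ↔ (a, p') ∈ p.menu := by
  constructor
  · intro h
    induction h <;> simp_all [menu]
  · intro h
    induction p with
    | nil => simp [menu] at h
    | pre b q =>
      obtain ⟨rfl, rfl⟩ : a = b ∧ p' = q := by simpa [menu] using h
      exact .pre a p'
    | choice q r ihq ihr =>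
      rcases List.mem_append.mp h with h | h
      · exact .left r (ihq h)
      · exact .right q (ihr h)

theorem mem_initials_iff_mem_menu {p : Proc Act} {a : Act} :
    a ∈ p.initials ↔ a ∈ p.menu.map Prod.fst := by
  simp [initials, step_iff_mem_menu]

theorem sizeOf_lt_of_step {p p' : Proc Act} {a : Act} (h : Step p a p') :
    sizeOf p' < sizeOf p := by
  induction h <;> simp <;> omega

def sumOver (as : List Act) (g : Act → Proc Act) : Proc Act :=
  as.foldr (fun a q => choice (pre a (g a)) q) nil

theorem step_sumOver_iff {as : List Act} {g : Act → Proc Act} {a : Act} {r : Proc Act} :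
    Step (sumOver as g) a r ↔ a ∈ as ∧ r = g a := by
  induction as with
  | nil => simp only [sumOver, List.foldr_nil, List.not_mem_nil, false_and, iff_false]; nofun
  | cons b as ih =>
    constructor
    · rintro (_ | ⟨_, (_ | _)⟩ | ⟨_, h⟩)
      · exact ⟨List.mem_cons_self, rfl⟩
      · exact ⟨List.mem_cons_of_mem _ (ih.mp h).1, (ih.mp h).2⟩
    · rintro ⟨ha | ⟨_, ha⟩, rfl⟩
      · exact .left _ (.pre _ _)
      · exact .right _ (ih.mpr ⟨ha, rfl⟩)

end Proc

open Proc

section Determinism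

variable {Act : Type}

theorem deterministic_iff {p : Proc Act} :
    Deterministic p ↔ (∀ a r₁ r₂, Step p a r₁ → Step p a r₂ → r₁ = r₂) ∧
      ∀ a p', Step p a p' → Deterministic p' := by
  refine ⟨fun h => ⟨h [] p (.refl p), fun a p' hp α r hr => h (a :: α) r (.cons hp hr)⟩, ?_⟩
  rintro ⟨hp, hder⟩ α r (_ | ⟨hstep, hr⟩)
  · exact hp
  · exact hder _ _ hstep _ r hr

theorem Deterministic.of_step {p p' : Proc Act} {a : Act} (hp : Deterministic p)
    (h : Step p a p') : Deterministic p' :=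
  (deterministic_iff.mp hp).2 a p' h

theorem deterministic_sumOver {as : List Act} {g : Act → Proc Act}
    (hg : ∀ a ∈ as, Deterministic (g a)) : Deterministic (sumOver as g) := by
  refine deterministic_iff.mpr ⟨fun a r₁ r₂ h₁ h₂ => ?_, fun a p' h => ?_⟩
  · rw [(step_sumOver_iff.mp h₁).2, (step_sumOver_iff.mp h₂).2]
  · obtain ⟨ha, rfl⟩ := step_sumOver_iff.mp h
    exact hg a ha

end Determinism

section ReadySimulation

variable {Act : Type}

theorem isReadySim_rsle : IsReadySim (@RSle Act) := by
  rintro p q ⟨S, hS, hpq⟩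
  obtain ⟨hinit, hstep⟩ := hS p q hpq
  refine ⟨hinit, fun a p' h => ?_⟩
  obtain ⟨q', hq', hpq'⟩ := hstep a p' h
  exact ⟨q', hq', S, hS, hpq'⟩

theorem RSle.of_forall_step {q p : Proc Act} (hinit : q.initials = p.initials)
    (hstep : ∀ a q', Step q a q' → ∃ p', Step p a p' ∧ RSle q' p') : RSle q p := by
  refine ⟨fun r s => RSle r s ∨ (r = q ∧ s = p), ?_, .inr ⟨rfl, rfl⟩⟩
  rintro r s (hrs | ⟨rfl, rfl⟩)
  · obtain ⟨hinit', hstep'⟩ := isReadySim_rsle r s hrs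
    refine ⟨hinit', fun a r' h => ?_⟩
    obtain ⟨s', hs', hrs'⟩ := hstep' a r' h
    exact ⟨s', hs', .inl hrs'⟩
  · refine ⟨hinit, fun a r' h => ?_⟩
    obtain ⟨s', hs', hrs'⟩ := hstep a r' h
    exact ⟨s', hs', .inl hrs'⟩

theorem IsReadySim.inBGO {S : Proc Act → Proc Act → Prop} (hS : IsReadySim S) :
    ∀ {b : Obs Act (Set Act)} {q p : Proc Act}, S q p → InBGO initials b q → InBGO initials b p
  | .node l T, q, p, hqp, hb => by
    rw [InBGO] at hb ⊢
    obtain ⟨hinit, hstep⟩ := hS q p hqp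
    refine ⟨hb.1.trans hinit, fun a b' hmem => ?_⟩
    obtain ⟨q', hq', hb'⟩ := hb.2 a b' hmem
    obtain ⟨p', hp', hqp'⟩ := hstep a q' hq'
    exact ⟨p', hp', hS.inBGO hqp' hb'⟩
termination_by b => sizeOf b
decreasing_by
  have := List.sizeOf_lt_of_mem hmem
  simp at this ⊢
  omega

theorem RSle.inBGO {q p : Proc Act} {b : Obs Act (Set Act)} (h : RSle q p)
    (hb : InBGO initials b q) : InBGO initials b p :=
  let ⟨_, hS, hqp⟩ := h
  hS.inBGO hqp hb

end ReadySimulation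

namespace Proc

variable {Act : Type}

def charObs (p : Proc Act) : Obs Act (Set Act) :=
  .node p.initials (p.menu.attach.map fun x => (x.1.1, charObs x.1.2))
termination_by sizeOf p
decreasing_by exact sizeOf_lt_of_step (step_iff_mem_menu.mpr x.2)

theorem mem_arcs_charObs {p : Proc Act} {a : Act} {b : Obs Act (Set Act)} :
    (a, b) ∈ p.menu.attach.map (fun x => (x.1.1, charObs x.1.2)) ↔
      ∃ p', Step p a p' ∧ b = charObs p' := by
  simp only [List.mem_map, List.mem_attach, true_and, Subtype.exists, Prod.mk.injEq,
    step_iff_mem_menu]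
  constructor
  · rintro ⟨⟨a, p'⟩, hmem, rfl, rfl⟩
    exact ⟨p', hmem, rfl⟩
  · rintro ⟨p', hmem, rfl⟩
    exact ⟨(a, p'), hmem, rfl, rfl⟩

theorem inBGO_charObs (p : Proc Act) : InBGO initials (charObs p) p := by
  rw [charObs, InBGO]
  refine ⟨rfl, fun a b hmem => ?_⟩
  obtain ⟨p', hp', rfl⟩ := mem_arcs_charObs.mp hmem
  exact ⟨p', hp', inBGO_charObs p'⟩
termination_by sizeOf p
decreasing_by exact sizeOf_lt_of_step hp'

theorem detObs_charObs {p : Proc Act} (hp : Deterministic p) : DetObs (charObs p) := by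
  rw [charObs, DetObs]
  constructor
  · rintro ⟨a, b⟩ hb ⟨a', b'⟩ hb' (rfl : a = a')
    obtain ⟨p₁, hp₁, rfl⟩ := mem_arcs_charObs.mp hb
    obtain ⟨p₂, hp₂, rfl⟩ := mem_arcs_charObs.mp hb'
    rw [(deterministic_iff.mp hp).1 a p₁ p₂ hp₁ hp₂]
  · intro a b hmem
    obtain ⟨p', hp', rfl⟩ := mem_arcs_charObs.mp hmem
    exact detObs_charObs (hp.of_step hp')
termination_by sizeOf p
decreasing_by exact sizeOf_lt_of_step hp'

theorem isReadySim_charObs :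
    IsReadySim fun q p : Proc Act => Deterministic q ∧ InBGO initials (charObs q) p := by
  rintro q p ⟨hq, hqp⟩
  rw [charObs, InBGO] at hqp
  refine ⟨hqp.1, fun a q' hq' => ?_⟩
  obtain ⟨p', hp', hqp'⟩ := hqp.2 a (charObs q') (mem_arcs_charObs.mpr ⟨q', hq', rfl⟩)
  exact ⟨p', hp', hq.of_step hq', hqp'⟩

end Proc

theorem Deterministic.rsle_of_inBGO_charObs {Act : Type} {q p : Proc Act}
    (hq : Deterministic q) (h : InBGO initials (charObs q) p) : RSle q p :=
  ⟨_, isReadySim_charObs, hq, h⟩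

/-- `∑_{a ∈ I(p)} a.(g a)`. -/
def Proc.resolve {Act : Type} (p : Proc Act) (g : Act → Proc Act) : Proc Act :=
  sumOver (p.menu.map Prod.fst) g

section Resolve

variable {Act : Type} {p : Proc Act} {g : Act → Proc Act}

theorem step_resolve_iff {a : Act} {r : Proc Act} :
    Step (p.resolve g) a r ↔ a ∈ p.initials ∧ r = g a := by
  rw [resolve, step_sumOver_iff, mem_initials_iff_mem_menu]

theorem initials_resolve : (p.resolve g).initials = p.initials :=
  Set.ext fun _ => ⟨fun ⟨_, h⟩ => (step_resolve_iff.mp h).1,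
    fun ha => ⟨_, step_resolve_iff.mpr ⟨ha, rfl⟩⟩⟩

theorem resolve_mem_PW (hg : ∀ a ∈ p.initials, ∃ p', Step p a p' ∧ g a ∈ PW p') :
    p.resolve g ∈ PW p := by
  refine ⟨deterministic_sumOver fun a ha => ?_, RSle.of_forall_step initials_resolve ?_⟩
  · obtain ⟨_, _, hga⟩ := hg a (mem_initials_iff_mem_menu.mpr ha)
    exact hga.1
  · intro a r h
    obtain ⟨ha, rfl⟩ := step_resolve_iff.mp h
    obtain ⟨p', hp', hga⟩ := hg a ha
    exact ⟨p', hp', hga.2⟩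

end Resolve

theorem exists_mem_PW_inBGO {Act : Type} (p : Proc Act) :
    ∀ b : Obs Act (Set Act), InBGO initials b p → DetObs b → ∃ q ∈ PW p, InBGO initials b q
  | .node l T, hb, hd => by
    rw [InBGO] at hb
    rw [DetObs] at hd
    have hresolve : ∀ a, ∃ g : Proc Act, a ∈ p.initials → ∃ p', Step p a p' ∧ g ∈ PW p' ∧
        ∀ b', (a, b') ∈ T → InBGO initials b' g := by
      intro a
      by_cases harc : ∃ b', (a, b') ∈ T
      · obtain ⟨b', hb'⟩ := harc
        obtain ⟨p', hp', hinb'⟩ := hb.2 a b' hb'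
        obtain ⟨g, hg, hbg⟩ := exists_mem_PW_inBGO p' b' hinb' (hd.2 a b' hb')
        refine ⟨g, fun _ => ⟨p', hp', hg, fun b'' hb'' => ?_⟩⟩
        rwa [show b'' = b' from hd.1 (a, b'') hb'' (a, b') hb' rfl]
      · by_cases ha : a ∈ p.initials
        · obtain ⟨p', hp'⟩ := ha
          obtain ⟨g, hg, -⟩ := exists_mem_PW_inBGO p' (.node p'.initials [])
            (by rw [InBGO]; simp) (by rw [DetObs]; simp)
          exact ⟨g, fun _ => ⟨p', hp', hg, fun b' hb' => (harc ⟨b', hb'⟩).elim⟩⟩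
        · exact ⟨.nil, fun h => (ha h).elim⟩
    choose g hg using hresolve
    refine ⟨p.resolve g, resolve_mem_PW fun a ha => ?_, ?_⟩
    · obtain ⟨p', hp', hga, -⟩ := hg a ha
      exact ⟨p', hp', hga⟩
    · rw [InBGO]
      refine ⟨hb.1.trans initials_resolve.symm, fun a b' hb' => ?_⟩
      obtain ⟨p', hp', -⟩ := hb.2 a b' hb'
      obtain ⟨-, -, -, hgb⟩ := hg a ⟨p', hp'⟩
      exact ⟨g a, step_resolve_iff.mpr ⟨⟨p', hp'⟩, rfl⟩, hgb b' hb'⟩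
termination_by sizeOf p
decreasing_by all_goals exact sizeOf_lt_of_step hp'

/-- `p₁ ⊑_PW p₂` (i.e. `PW(p₁) ⊆ PW(p₂)`) iff
`dBGO_I(p₁) ⊆ dBGO_I(p₂)`. -/
theorem stmt11 {Act : Type} (p₁ p₂ : Proc Act) :
    PW p₁ ⊆ PW p₂ ↔
      {b | InBGO Proc.initials b p₁ ∧ DetObs b} ⊆
        {b | InBGO Proc.initials b p₂ ∧ DetObs b} := by
  constructor
  · rintro hPW b ⟨hb, hdet⟩
    obtain ⟨q, hq, hbq⟩ := exists_mem_PW_inBGO p₁ b hb hdet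
    exact ⟨(hPW hq).2.inBGO hbq, hdet⟩
  · rintro hBGO q ⟨hdet, hq⟩
    have hchar : InBGO initials (charObs q) p₂ :=
      (hBGO ⟨hq.inBGO (inBGO_charObs q), detObs_charObs hdet⟩).1
    exact ⟨hdet, hdet.rsle_of_inBGO_charObs hchar⟩
end

section
/- For all BCCSP processes p and q: (for every b ∈ BGO_I(p) there exists b' ∈ BGO_I(q) with b ≤^⊇ b') if and only if BGO_I(p) ⊆ BGO_I(q). -/
/-- The order `≤^⊇` on branching observations: `⟨A₁,S₁⟩ ≤^⊇ ⟨A₂,S₂⟩` iff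
`A₁ ⊇ A₂` and there is a bijection between `S₁` and `S₂` matching each
`(a, c) ∈ S₁` to a pair `(a, c') ∈ S₂` with the same action and `c ≤^⊇ c'`. -/
def ObsLe {Act : Type} : Obs Act (Set Act) → Obs Act (Set Act) → Prop
  | Obs.node A₁ S₁, Obs.node A₂ S₂ =>
      A₂ ⊆ A₁ ∧ ∃ S₂' : List (Act × Obs Act (Set Act)), S₂.Perm S₂' ∧
        S₁.length = S₂'.length ∧
        ∀ x y, (x, y) ∈ S₁.zip S₂' → x.1 = y.1 ∧ ObsLe x.2 y.2
termination_by b _ => sizeOf b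
decreasing_by
  have hx : x ∈ S₁ := (List.of_mem_zip (by assumption)).1
  have h1 : sizeOf x < sizeOf S₁ := List.sizeOf_lt_of_mem hx
  obtain ⟨a, b⟩ := x
  simp at h1 ⊢
  omega


namespace Stmt13Aux

theorem inBGO_iff {Act Λ : Type} (L : Proc Act → Λ) (l : Λ)
    (S : List (Act × Obs Act Λ)) (p : Proc Act) :
    InBGO L (Obs.node l S) p ↔
      (l = L p ∧ ∀ a b, (a, b) ∈ S → ∃ p', Proc.Step p a p' ∧ InBGO L b p') := by
  rw [InBGO]

theorem obsLe_iff {Act : Type} (A₁ A₂ : Set Act) S₁ S₂ :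
    ObsLe (Obs.node A₁ S₁) (Obs.node A₂ S₂) ↔
      (A₂ ⊆ A₁ ∧ ∃ S₂' : List (Act × Obs Act (Set Act)), S₂.Perm S₂' ∧
        S₁.length = S₂'.length ∧
        ∀ x y, (x, y) ∈ S₁.zip S₂' → x.1 = y.1 ∧ ObsLe x.2 y.2) := by
  rw [ObsLe]

theorem zip_same {α : Type*} : ∀ (S : List α) (x y : α), (x, y) ∈ S.zip S → x = y
  | a :: S, x, y, h => by
      simp only [List.zip_cons_cons, List.mem_cons] at h
      rcases h with h | h
      · simp_all
      · exact zip_same S x y h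

theorem obsLe_refl {Act : Type} : ∀ b : Obs Act (Set Act), ObsLe b b
  | Obs.node A S => by
      rw [obsLe_iff]
      refine ⟨subset_rfl, S, List.Perm.refl _, rfl, ?_⟩
      intro x y hxy
      have hx : x ∈ S := (List.of_mem_zip hxy).1
      have hxy' := zip_same S x y hxy
      subst hxy'
      exact ⟨rfl, obsLe_refl x.2⟩
termination_by b => sizeOf b
decreasing_by
  have h1 : sizeOf x < sizeOf S := List.sizeOf_lt_of_mem hx
  obtain ⟨a, b⟩ := x
  simp at h1 ⊢
  omega

def procSuccs {Act : Type} : Proc Act → List (Act × Proc Act)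
  | Proc.nil => []
  | Proc.pre a p => [(a, p)]
  | Proc.choice p q => procSuccs p ++ procSuccs q

theorem step_iff_succs {Act : Type} {p : Proc Act} {a : Act} {p' : Proc Act} :
    Proc.Step p a p' ↔ (a, p') ∈ procSuccs p := by
  constructor
  · intro h
    induction h with
    | pre => simp [procSuccs]
    | left q _ ih => simp [procSuccs]; exact Or.inl ih
    | right p _ ih => simp [procSuccs]; exact Or.inr ih
  · intro h
    induction p with
    | nil => simp [procSuccs] at h
    | pre b r => simp [procSuccs] at h; rcases h with ⟨rfl, rfl⟩; exact Proc.Step.pre a p'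
    | choice r s ihr ihs =>
        simp [procSuccs] at h
        rcases h with h | h
        · exact Proc.Step.left _ (ihr h)
        · exact Proc.Step.right _ (ihs h)

/-- The trivial observation of a process. -/
def trivObs {Act : Type} (p : Proc Act) : Obs Act (Set Act) :=
  Obs.node (Proc.initials p) []

theorem trivObs_mem {Act : Type} (p : Proc Act) :
    InBGO Proc.initials (trivObs p) p := by
  rw [trivObs, inBGO_iff]
  exact ⟨rfl, by simp⟩

theorem list_choice {α β : Type*} {P : α → β → Prop} :
    ∀ S : List α, (∀ x ∈ S, ∃ y, P x y) →
      ∃ T : List β, S.length = T.length ∧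
        (∀ x y, (x, y) ∈ S.zip T → P x y) ∧
        (∀ y ∈ T, ∃ x ∈ S, P x y)
  | [], _ => ⟨[], rfl, by simp, by simp⟩
  | a :: S, h => by
      obtain ⟨y, hy⟩ := h a (by simp)
      obtain ⟨T, hlen, hzip, hmem⟩ := list_choice S (fun x hx => h x (by simp [hx]))
      refine ⟨y :: T, by simp [hlen], ?_, ?_⟩
      · intro x z hxz
        simp only [List.zip_cons_cons, List.mem_cons] at hxz
        rcases hxz with h' | h'
        · obtain ⟨rfl, rfl⟩ : x = a ∧ z = y := by simpa [Prod.ext_iff] using h'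
          exact hy
        · exact hzip _ _ h'
      · intro z hz
        rcases List.mem_cons.mp hz with rfl | hz
        · exact ⟨a, by simp, hy⟩
        · obtain ⟨x, hx, hP⟩ := hmem z hz
          exact ⟨x, by simp [hx], hP⟩

/-- `Ext b b₊`: `b₊` extends `b` with the same labels, extra children, and
every action in the label is witnessed by a child. -/
inductive Ext {Act : Type} : Obs Act (Set Act) → Obs Act (Set Act) → Prop where
  | mk (A : Set Act) (S Sₑ R : List (Act × Obs Act (Set Act))) :
      S.length = Sₑ.length →
      (∀ x y, (x, y) ∈ S.zip Sₑ → x.1 = y.1) →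
      (∀ x y, (x, y) ∈ S.zip Sₑ → Ext x.2 y.2) →
      (∀ a ∈ A, ∃ c, (a, c) ∈ Sₑ ++ R) →
      Ext (Obs.node A S) (Obs.node A (Sₑ ++ R))

theorem lemA {Act : Type} : ∀ (b : Obs Act (Set Act)) (p : Proc Act),
    InBGO Proc.initials b p → ∃ bₑ, InBGO Proc.initials bₑ p ∧ Ext b bₑ
  | Obs.node l S, p => by
      rw [inBGO_iff]
      rintro ⟨rfl, hS⟩
      have hch : ∀ x ∈ S, ∃ y : Act × Obs Act (Set Act),
          x.1 = y.1 ∧ Ext x.2 y.2 ∧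
            ∃ p', Proc.Step p x.1 p' ∧ InBGO Proc.initials y.2 p' := by
        intro x hx
        obtain ⟨p', hstep, hin⟩ := hS x.1 x.2 (by simpa using hx)
        obtain ⟨cₑ, hcin, hcext⟩ := lemA x.2 p' hin
        exact ⟨(x.1, cₑ), rfl, hcext, p', hstep, hcin⟩
      obtain ⟨Sₑ, hlen, hzip, hmem⟩ := list_choice S hch
      refine ⟨Obs.node (Proc.initials p)
          (Sₑ ++ (procSuccs p).map (fun y => (y.1, trivObs y.2))), ?_, ?_⟩
      · rw [inBGO_iff]
        refine ⟨rfl, ?_⟩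
        intro a c hac
        rcases List.mem_append.mp hac with h | h
        · obtain ⟨x, _, h1, _, p', hst, hin⟩ := hmem (a, c) h
          exact ⟨p', by rw [h1] at hst; exact hst, hin⟩
        · simp only [List.mem_map] at h
          obtain ⟨⟨a', p'⟩, hmem', heq⟩ := h
          obtain ⟨rfl, rfl⟩ : a' = a ∧ trivObs p' = c := by
            simpa [Prod.ext_iff] using heq
          exact ⟨p', step_iff_succs.mpr hmem', trivObs_mem p'⟩
      · refine Ext.mk _ S Sₑ _ hlen (fun x y h => (hzip x y h).1)
          (fun x y h => (hzip x y h).2.1) ?_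
        intro a ha
        obtain ⟨p', hst⟩ := ha
        exact ⟨trivObs p', List.mem_append.mpr (Or.inr
          (List.mem_map.mpr ⟨(a, p'), step_iff_succs.mp hst, rfl⟩))⟩
termination_by b _ => sizeOf b
decreasing_by
  have h1 : sizeOf x < sizeOf S := List.sizeOf_lt_of_mem hx
  obtain ⟨a, b⟩ := x
  simp at h1 ⊢
  omega

theorem ext_inv {Act : Type} {A : Set Act} {S : List (Act × Obs Act (Set Act))}
    {bE : Obs Act (Set Act)} (h : Ext (Obs.node A S) bE) :
    ∃ Sₑ R, bE = Obs.node A (Sₑ ++ R) ∧ S.length = Sₑ.length ∧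
      (∀ x y, (x, y) ∈ S.zip Sₑ → x.1 = y.1) ∧
      (∀ x y, (x, y) ∈ S.zip Sₑ → Ext x.2 y.2) ∧
      (∀ a ∈ A, ∃ c, (a, c) ∈ Sₑ ++ R) := by
  cases h with
  | mk _ _ Sₑ R hlen hact hext hfull => exact ⟨Sₑ, R, rfl, hlen, hact, hext, hfull⟩

theorem lemB {Act : Type} : ∀ (b : Obs Act (Set Act)),
    ∀ (bₑ b' : Obs Act (Set Act)) (q : Proc Act),
    Ext b bₑ → ObsLe bₑ b' → InBGO Proc.initials b' q → InBGO Proc.initials b q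
  | Obs.node A S => by
      intro bₑ b' q hExt hle hin'
      obtain ⟨B, S'⟩ := b'
      obtain ⟨Sₑ, R, rfl, hlen, hact, hext, hfull⟩ := ext_inv hExt
      · rw [obsLe_iff] at hle
        obtain ⟨hBA, S₂', hperm, hlen2, hzip2⟩ := hle
        rw [inBGO_iff] at hin'
        obtain ⟨rfl, hS'⟩ := hin'
        rw [inBGO_iff]
        constructor
        · apply Set.Subset.antisymm _ hBA
          intro a ha
          obtain ⟨c, hc⟩ := hfull a ha
          obtain ⟨i, hi, hgi⟩ := List.mem_iff_getElem.mp hc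
          have hi2 : i < S₂'.length := hlen2 ▸ hi
          have hz : ((Sₑ ++ R)[i], S₂'[i]) ∈ (Sₑ ++ R).zip S₂' := by
            have := List.getElem_mem (l := (Sₑ ++ R).zip S₂') (n := i)
              (by rw [List.length_zip, hlen2]; simp [hi2])
            rwa [List.getElem_zip] at this
          have h1 := (hzip2 _ _ hz).1
          rw [hgi] at h1
          have hmem' : S₂'[i] ∈ S' := hperm.symm.subset (List.getElem_mem hi2)
          obtain ⟨q', hstep, _⟩ := hS' S₂'[i].1 S₂'[i].2 (by simpa using hmem')
          have h3 : a = S₂'[i].1 := h1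
          exact ⟨q', h3 ▸ hstep⟩
        · intro a c hac
          obtain ⟨i, hi, hgi⟩ := List.mem_iff_getElem.mp hac
          have hiE : i < Sₑ.length := hlen ▸ hi
          have hi2 : i < S₂'.length := by
            rw [← hlen2, List.length_append]; omega
          have hzSE : (S[i], Sₑ[i]) ∈ S.zip Sₑ := by
            have := List.getElem_mem (l := S.zip Sₑ) (n := i)
              (by rw [List.length_zip, ← hlen]; simp [hi])
            rwa [List.getElem_zip] at this
          have hz2 : ((Sₑ ++ R)[i], S₂'[i]) ∈ (Sₑ ++ R).zip S₂' := by
            have := List.getElem_mem (l := (Sₑ ++ R).zip S₂') (n := i)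
              (by rw [List.length_zip, hlen2]; simp [hi2])
            rwa [List.getElem_zip] at this
          have hgapp : (Sₑ ++ R)[i] = Sₑ[i] := List.getElem_append_left hiE
          rw [hgapp] at hz2
          have hact1 := hact _ _ hzSE
          have hext1 := hext _ _ hzSE
          have hzip21 := (hzip2 _ _ hz2).1
          have hle1 := (hzip2 _ _ hz2).2
          rw [hgi] at hact1 hext1
          have hmem2 : S₂'[i] ∈ S' := hperm.symm.subset (List.getElem_mem hi2)
          obtain ⟨q', hstep, hin2⟩ := hS' S₂'[i].1 S₂'[i].2 (by simpa using hmem2)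
          refine ⟨q', ?_, ?_⟩
          · have h3 : a = S₂'[i].1 := hact1.trans hzip21
            exact h3 ▸ hstep
          · exact lemB c Sₑ[i].2 S₂'[i].2 q' hext1 hle1 hin2
termination_by b => sizeOf b
decreasing_by
  have h1 := List.sizeOf_lt_of_mem hac
  simp at h1 ⊢
  omega

end Stmt13Aux

/-- for all processes `p` and `q`,
(every `b ∈ BGO_I(p)` is `≤^⊇`-dominated by some `b' ∈ BGO_I(q)`) iff
`BGO_I(p) ⊆ BGO_I(q)`. -/
theorem stmt13 {Act : Type} (p q : Proc Act) :
    (∀ b, InBGO Proc.initials b p →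
        ∃ b', InBGO Proc.initials b' q ∧ ObsLe b b') ↔
      {b | InBGO Proc.initials b p} ⊆ {b | InBGO Proc.initials b q} := by
  constructor
  · intro H b hb
    obtain ⟨bₑ, hbe, hExt⟩ := Stmt13Aux.lemA b p hb
    obtain ⟨b', hb', hle⟩ := H bₑ hbe
    exact Stmt13Aux.lemB b bₑ b' q hExt hle hb'
  · intro H b hb
    exact ⟨b, H hb, Stmt13Aux.obsLe_refl b⟩
end

section
/- The axiom systems {B1–B4, (RS), (ND^R)} and {B1–B4, (RS), (R)} are logically equivalent: they derive exactly the same closed inequations. Here (ND^R) is the scheme a·(p + q) ≼ a·p + a·(q + r) whenever I(q) ⊆ I(p), and (R) is the scheme a·(b·p + b·q + u) ≼ a·(b·p + u) + a·(b·q + v) for all a, b ∈ Act and all closed processes p, q, u, v. -/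
/-- Ground inequational derivability from an axiom system `E`:
reflexivity, transitivity, and congruence w.r.t. prefix and choice. -/
inductive Deriv {Act : Type} (E : Proc Act → Proc Act → Prop) :
    Proc Act → Proc Act → Prop where
  | ax {p q : Proc Act} : E p q → Deriv E p q
  | refl (p : Proc Act) : Deriv E p p
  | trans {p q r : Proc Act} : Deriv E p q → Deriv E q r → Deriv E p r
  | pre (a : Act) {p q : Proc Act} : Deriv E p q → Deriv E (Proc.pre a p) (Proc.pre a q)
  | add {p q p' q' : Proc Act} : Deriv E p q → Deriv E p' q' →
      Deriv E (Proc.choice p p') (Proc.choice q q')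

/-- The axioms B1–B4 (as pairs of inequations) together with the
ready-simulation axiom (RS): `p ≼ p + q` whenever `I(p) = I(q)`. -/
inductive BaseAx {Act : Type} : Proc Act → Proc Act → Prop where
  | B1 (p q : Proc Act) : BaseAx (Proc.choice p q) (Proc.choice q p)
  | B2l (p q r : Proc Act) :
      BaseAx (Proc.choice (Proc.choice p q) r) (Proc.choice p (Proc.choice q r))
  | B2r (p q r : Proc Act) :
      BaseAx (Proc.choice p (Proc.choice q r)) (Proc.choice (Proc.choice p q) r)
  | B3l (p : Proc Act) : BaseAx (Proc.choice p p) p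
  | B3r (p : Proc Act) : BaseAx p (Proc.choice p p)
  | B4l (p : Proc Act) : BaseAx (Proc.choice p Proc.nil) p
  | B4r (p : Proc Act) : BaseAx p (Proc.choice p Proc.nil)
  | RS (p q : Proc Act) : Proc.initials p = Proc.initials q →
      BaseAx p (Proc.choice p q)

/-- The scheme (ND): `a(p + q) ≼ ap + a(q + r)` whenever `M(p, q, r)`. -/
def NDax {Act : Type} (M : Proc Act → Proc Act → Proc Act → Prop) :
    Proc Act → Proc Act → Prop := fun s t =>
  ∃ (a : Act) (p q r : Proc Act), M p q r ∧
    s = Proc.pre a (Proc.choice p q) ∧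
    t = Proc.choice (Proc.pre a p) (Proc.pre a (Proc.choice q r))

/-- The constraint for readiness: `M_R(p, q, r) ⇔ I(q) ⊆ I(p)`. -/
def M_R {Act : Type} : Proc Act → Proc Act → Proc Act → Prop := fun p q _ =>
  Proc.initials q ⊆ Proc.initials p

/-- The classic readiness scheme (R):
`a(bp + bq + u) ≼ a(bp + u) + a(bq + v)`. -/
def Rax {Act : Type} : Proc Act → Proc Act → Prop := fun s t =>
  ∃ (a b : Act) (p q u v : Proc Act),
    s = Proc.pre a
          (Proc.choice (Proc.choice (Proc.pre b p) (Proc.pre b q)) u) ∧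
    t = Proc.choice (Proc.pre a (Proc.choice (Proc.pre b p) u))
          (Proc.pre a (Proc.choice (Proc.pre b q) v))

section Aux

variable {Act : Type}

lemma initials_pre (a : Act) (p : Proc Act) :
    (Proc.pre a p).initials = {a} := by
  ext x; constructor
  · rintro ⟨p', h⟩; cases h; rfl
  · rintro rfl; exact ⟨p, Proc.Step.pre _ p⟩

lemma initials_choice (p q : Proc Act) :
    (Proc.choice p q).initials = p.initials ∪ q.initials := by
  ext x; constructor
  · rintro ⟨p', h⟩
    cases h with
    | left _ h => exact Or.inl ⟨_, h⟩
    | right _ h => exact Or.inr ⟨_, h⟩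
  · rintro (⟨p', h⟩ | ⟨q', h⟩)
    exacts [⟨p', Proc.Step.left _ h⟩, ⟨q', Proc.Step.right _ h⟩]

variable {E : Proc Act → Proc Act → Prop} (hB : ∀ p q, BaseAx p q → E p q)

include hB

lemma dax {p q : Proc Act} (h : BaseAx p q) : Deriv E p q := .ax (hB _ _ h)

lemma dcomm (p q : Proc Act) :
    Deriv E (Proc.choice p q) (Proc.choice q p) := dax hB (.B1 p q)

lemma dassoc (p q r : Proc Act) :
    Deriv E (Proc.choice (Proc.choice p q) r) (Proc.choice p (Proc.choice q r)) :=
  dax hB (.B2l p q r)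

lemma dassoc' (p q r : Proc Act) :
    Deriv E (Proc.choice p (Proc.choice q r)) (Proc.choice (Proc.choice p q) r) :=
  dax hB (.B2r p q r)

lemma dswap (p q r : Proc Act) :
    Deriv E (Proc.choice p (Proc.choice q r)) (Proc.choice q (Proc.choice p r)) :=
  .trans (dassoc' hB p q r)
    (.trans (.add (dcomm hB p q) (.refl r)) (dassoc hB q p r))

/-- if `p` can do a `b`-step to `p'`, then `p ≼ p + b·p'`. -/
lemma absorbL {p p' : Proc Act} {b : Act} (h : Proc.Step p b p') :
    Deriv E p (Proc.choice p (Proc.pre b p')) := by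
  induction h with
  | pre a p => exact dax hB (.B3r _)
  | left q h ih =>
      exact .trans (.add ih (.refl q))
        (.trans (dassoc hB _ _ q) (.trans (.add (.refl _) (dcomm hB _ q))
          (dassoc' hB _ q _)))
  | right p h ih =>
      exact .trans (.add (.refl p) ih) (dassoc' hB _ _ _)

/-- if `p` can do a `b`-step to `p'`, then `b·p' + p ≼ p`. -/
lemma absorbR {p p' : Proc Act} {b : Act} (h : Proc.Step p b p') :
    Deriv E (Proc.choice (Proc.pre b p') p) p := by
  induction h with
  | pre a p => exact dax hB (.B3l _)
  | left q h ih =>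
      exact .trans (dassoc' hB _ _ q) (.add ih (.refl q))
  | right p h ih =>
      exact .trans (dswap hB _ p _) (.add (.refl p) ih)

lemma key (hR : ∀ p q, Rax p q → E p q) :
    ∀ (q p r : Proc Act) (a : Act), q.initials ⊆ p.initials →
      Deriv E (Proc.pre a (Proc.choice p q))
        (Proc.choice (Proc.pre a p) (Proc.pre a (Proc.choice q r))) := by
  intro q
  induction q with
  | nil =>
      intro p r a _
      refine .trans (.pre a (dax hB (.B4l p))) (.ax (hB _ _ (.RS _ _ ?_)))
      rw [initials_pre, initials_pre]
  | pre b q' _ =>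
      intro p r a h
      obtain ⟨p', hstep⟩ : ∃ p', Proc.Step p b p' := h ⟨q', .pre b q'⟩
      have h1 : Deriv E (Proc.choice p (Proc.pre b q'))
          (Proc.choice (Proc.choice (Proc.pre b p') (Proc.pre b q')) p) :=
        .trans (.add (absorbL hB hstep) (.refl _))
          (.trans (dassoc hB _ _ _) (dcomm hB _ _))
      have h2 : Deriv E
          (Proc.pre a (Proc.choice (Proc.choice (Proc.pre b p') (Proc.pre b q')) p))
          (Proc.choice (Proc.pre a (Proc.choice (Proc.pre b p') p))
            (Proc.pre a (Proc.choice (Proc.pre b q') r))) :=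
        .ax (hR _ _ ⟨a, b, p', q', p, r, rfl, rfl⟩)
      exact .trans (.pre a h1) (.trans h2
        (.add (.pre a (absorbR hB hstep)) (.refl _)))
  | choice q1 q2 ih1 ih2 =>
      intro p r a h
      rw [initials_choice] at h
      have h1 : q1.initials ⊆ p.initials := fun x hx => h (Or.inl hx)
      have h2 : q2.initials ⊆ (Proc.choice p q1).initials := by
        rw [initials_choice]; exact fun x hx => Or.inl (h (Or.inr hx))
      have step1 : Deriv E (Proc.pre a (Proc.choice p (Proc.choice q1 q2)))
          (Proc.pre a (Proc.choice (Proc.choice p q1) q2)) :=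
        .pre a (dassoc' hB p q1 q2)
      have step2 := ih2 (Proc.choice p q1) (Proc.choice q1 r) a h2
      have step3 := ih1 p (Proc.choice q2 r) a h1
      -- now: a(p+(q1+q2)) ≼ a(p+q1) + a(q2+(q1+r))
      --                   ≼ (ap + a(q1+(q2+r))) + a(q2+(q1+r))
      have swapq : Deriv E (Proc.choice q2 (Proc.choice q1 r))
          (Proc.choice q1 (Proc.choice q2 r)) := dswap hB q2 q1 r
      have habs : Deriv E
          (Proc.choice (Proc.choice (Proc.pre a p)
              (Proc.pre a (Proc.choice q1 (Proc.choice q2 r))))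
            (Proc.pre a (Proc.choice q2 (Proc.choice q1 r))))
          (Proc.choice (Proc.pre a p)
            (Proc.pre a (Proc.choice (Proc.choice q1 q2) r))) := by
        refine .trans (.add (.refl _) (.pre a swapq)) ?_
        refine .trans (dassoc hB _ _ _) (.add (.refl _) ?_)
        exact .trans (dax hB (.B3l _)) (.pre a (dassoc' hB q1 q2 r))
      exact .trans step1 (.trans step2
        (.trans (.add step3 (.refl _)) habs))

lemma keyND (hN : ∀ p q, NDax M_R p q → E p q) :
    ∀ p q, Rax p q → Deriv E p q := by
  rintro s t ⟨a, b, p, q, u, v, rfl, rfl⟩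
  have hI : (Proc.pre b q).initials ⊆ (Proc.choice (Proc.pre b p) u).initials := by
    rw [initials_pre, initials_choice, initials_pre]
    rintro x rfl; exact Or.inl rfl
  have h1 : Deriv E
      (Proc.choice (Proc.choice (Proc.pre b p) (Proc.pre b q)) u)
      (Proc.choice (Proc.choice (Proc.pre b p) u) (Proc.pre b q)) :=
    .trans (dassoc hB _ _ _) (.trans (.add (.refl _) (dcomm hB _ _))
      (dassoc' hB _ _ _))
  have h2 : Deriv E
      (Proc.pre a (Proc.choice (Proc.choice (Proc.pre b p) u) (Proc.pre b q)))
      (Proc.choice (Proc.pre a (Proc.choice (Proc.pre b p) u))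
        (Proc.pre a (Proc.choice (Proc.pre b q) v))) :=
    .ax (hN _ _ ⟨a, Proc.choice (Proc.pre b p) u, Proc.pre b q, v, hI, rfl, rfl⟩)
  exact .trans (.pre a h1) h2

omit hB in
lemma Deriv.mono {F : Proc Act → Proc Act → Prop}
    (h : ∀ p q, E p q → Deriv F p q) {p q : Proc Act} :
    Deriv E p q → Deriv F p q := by
  intro hd
  induction hd with
  | ax h' => exact h _ _ h'
  | refl p => exact .refl p
  | trans _ _ ih1 ih2 => exact .trans ih1 ih2
  | pre a _ ih => exact .pre a ih
  | add _ _ ih1 ih2 => exact .add ih1 ih2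

end Aux

/-- the axiom systems `{B1–B4, (RS), (ND^R)}` and
`{B1–B4, (RS), (R)}` derive the same closed inequations. -/
theorem stmt16 {Act : Type} (p q : Proc Act) :
    Deriv (fun s t => BaseAx s t ∨ NDax M_R s t) p q ↔
      Deriv (fun s t => BaseAx s t ∨ Rax s t) p q := by
  constructor
  · refine Deriv.mono (fun s t h => ?_)
    rcases h with h | ⟨a, p', q', r', hM, rfl, rfl⟩
    · exact .ax (Or.inl h)
    · exact key (fun p q h => Or.inl h) (fun p q h => Or.inr h) q' p' r' a hM
  · refine Deriv.mono (fun s t h => ?_)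
    rcases h with h | h
    · exact .ax (Or.inl h)
    · exact keyND (fun p q h => Or.inl h) (fun p q h => Or.inr h) s t h
end

section
/- For all BCCSP processes p and q: Revivals(p) ⊆ Revivals(q) if and only if LGO_I(p) ≤^{l⊇∨f} LGO_I(q), i.e. if and only if for every X0a1X1…anXn ∈ LGO_I(p) and every a ∈ Xn there exists Y0a1Y1…anYn ∈ LGO_I(q) with a ∈ Yn and Yn ⊆ Xn. -/
/-- The revivals of `p`: triples `⟨α, X, a⟩` with `p ⇒α p'`,
`I(p') ∩ X = ∅` and `a ∈ I(p')`. -/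
def revivals {Act : Type} (p : Proc Act) : Set (List Act × Set Act × Act) :=
  {r | ∃ p', Proc.Steps p r.1 p' ∧ Proc.initials p' ∩ r.2.1 = ∅ ∧
        r.2.2 ∈ Proc.initials p'}


lemma obsFinal_cons {Act Λ : Type} (l : Λ) (a : Act) (t : LObs Act Λ) :
    obsFinal (l, (a, t.1) :: t.2) = obsFinal t := by
  simp only [obsFinal, List.map_cons, List.getLastD_cons]

lemma steps_to_obs {Act Λ : Type} (L : Proc Act → Λ) {p p' : Proc Act} {α : List Act}
    (h : Proc.Steps p α p') :
    ∃ o, InLGO L o p ∧ obsActs o = α ∧ obsFinal o = L p' := by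
  induction h with
  | refl p => exact ⟨(L p, []), InLGO.nil p, rfl, rfl⟩
  | cons s _ ih =>
    obtain ⟨o, ho, hacts, hfin⟩ := ih
    refine ⟨(L _, (_, o.1) :: o.2), InLGO.cons s ho, ?_, ?_⟩
    · simp [obsActs] at hacts ⊢; exact hacts
    · rw [obsFinal_cons]; exact hfin

lemma obs_to_steps {Act Λ : Type} {L : Proc Act → Λ} {p : Proc Act} {o : LObs Act Λ}
    (h : InLGO L o p) :
    ∃ p', Proc.Steps p (obsActs o) p' ∧ obsFinal o = L p' := by
  induction h with
  | nil p => exact ⟨p, Proc.Steps.refl p, rfl⟩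
  | cons s _ ih =>
    obtain ⟨p', hs, hfin⟩ := ih
    exact ⟨p', Proc.Steps.cons s hs, by rw [obsFinal_cons]; exact hfin⟩

/-- `Revivals(p) ⊆ Revivals(q)` iff
`LGO_I(p) ≤^{l⊇∨f} LGO_I(q)`. -/
theorem stmt18 {Act : Type} (p q : Proc Act) :
    revivals p ⊆ revivals q ↔
      ∀ o, InLGO Proc.initials o p → ∀ a ∈ obsFinal o,
        ∃ o', InLGO Proc.initials o' q ∧ obsActs o' = obsActs o ∧
          a ∈ obsFinal o' ∧ obsFinal o' ⊆ obsFinal o := by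
  constructor
  · intro h o ho a ha
    obtain ⟨p', hs, hfin⟩ := obs_to_steps ho
    rw [hfin] at ha
    have hr : (obsActs o, ((Proc.initials p')ᶜ : Set Act), a) ∈ revivals p := by
      exact ⟨p', hs, by simp, ha⟩
    obtain ⟨q', hqs, hint, haq⟩ := h hr
    have hsub : Proc.initials q' ⊆ Proc.initials p' := by
      intro x hx
      by_contra hxn
      exact absurd hint (by
        apply Set.Nonempty.ne_empty
        exact ⟨x, hx, hxn⟩)
    obtain ⟨o', ho', hacts, hfin'⟩ := steps_to_obs Proc.initials hqs
    exact ⟨o', ho', hacts, by rw [hfin']; exact haq, by rw [hfin', hfin]; exact hsub⟩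
  · rintro h ⟨α, X, a⟩ ⟨p', hs, hint, ha⟩
    obtain ⟨o, ho, hacts, hfin⟩ := steps_to_obs Proc.initials hs
    obtain ⟨o', ho', hacts', haf, hsub⟩ := h o ho a (by rw [hfin]; exact ha)
    obtain ⟨q', hqs, hfin'⟩ := obs_to_steps ho'
    refine ⟨q', by rwa [hacts' , hacts] at hqs, ?_, by rwa [← hfin']⟩
    rw [hfin'] at hsub
    rw [hfin] at hsub
    apply Set.eq_empty_of_subset_empty
    intro x ⟨hx1, hx2⟩
    rw [← hint]
    exact ⟨hsub hx1, hx2⟩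
end

section
/- Let ⊑ be a behavior preorder on BCCSP processes such that (i) for all p and q, I(p) = I(q) implies p ⊑ p + q, and (ii) p ⊑ q implies I(p) = I(q). Then for all processes p and q: p ⊑ q if and only if there exists an I-simulation up-to ⊑ relating p to q. -/
/-- Bisimilarity `p ≡_B q`. -/
def Bisimilar {Act : Type} (p q : Proc Act) : Prop :=
  ∃ R : Proc Act → Proc Act → Prop, R p q ∧
    ∀ r s, R r s →
      (∀ a r', Proc.Step r a r' → ∃ s', Proc.Step s a s' ∧ R r' s') ∧
      (∀ a s', Proc.Step s a s' → ∃ r', Proc.Step r a r' ∧ R r' s')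

/-- `S` is an `I`-simulation up-to the behavior preorder `R`:
`p S q` implies `I(p) = I(q)` and every `p →a p'` is matched by some
`q' ⊒ q`... more precisely, there are `q'` and `q'ₐ` with `q' ⊑ q`
(i.e. `R q' q`), `q' →a q'ₐ` and `p' S q'ₐ`. -/
def IsISimUpTo {Act : Type} (R S : Proc Act → Proc Act → Prop) : Prop :=
  ∀ p q, S p q → Proc.initials p = Proc.initials q ∧
    ∀ a p', Proc.Step p a p' →
      ∃ q' q'', R q' q ∧ Proc.Step q' a q'' ∧ S p' q''

namespace Stmt19Aux

@[simp] lemma step_nil_iff {Act : Type} (a : Act) (r : Proc Act) :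
    Proc.Step Proc.nil a r ↔ False := by
  constructor
  · intro h; cases h
  · exact False.elim

@[simp] lemma step_pre_iff {Act : Type} (b a : Act) (s r : Proc Act) :
    Proc.Step (Proc.pre b s) a r ↔ a = b ∧ r = s := by
  constructor
  · intro h; cases h; exact ⟨rfl, rfl⟩
  · rintro ⟨rfl, rfl⟩; exact .pre _ _

@[simp] lemma step_choice_iff {Act : Type} (u v : Proc Act) (a : Act) (r : Proc Act) :
    Proc.Step (Proc.choice u v) a r ↔ Proc.Step u a r ∨ Proc.Step v a r := by
  constructor
  · intro h; cases h with
    | left _ h => exact Or.inl h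
    | right _ h => exact Or.inr h
  · rintro (h | h)
    · exact .left _ h
    · exact .right _ h

lemma bisim_of_same_steps {Act : Type} {u v : Proc Act}
    (h : ∀ a r, Proc.Step u a r ↔ Proc.Step v a r) : Bisimilar u v := by
  refine ⟨fun x y => x = y ∨ (x = u ∧ y = v), Or.inr ⟨rfl, rfl⟩, ?_⟩
  rintro r s (rfl | ⟨rfl, rfl⟩)
  · exact ⟨fun a r' h' => ⟨r', h', Or.inl rfl⟩, fun a s' h' => ⟨s', h', Or.inl rfl⟩⟩
  · exact ⟨fun a r' h' => ⟨r', (h _ _).mp h', Or.inl rfl⟩,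
      fun a s' h' => ⟨s', (h _ _).mpr h', Or.inl rfl⟩⟩

def sig {Act : Type} : List (Act × Proc Act) → Proc Act
  | [] => .nil
  | x :: l => .choice (.pre x.1 x.2) (sig l)

def sumL {Act : Type} : List (Proc Act) → Proc Act
  | [] => .nil
  | s :: l => .choice s (sumL l)

def der {Act : Type} : Proc Act → List (Act × Proc Act)
  | .nil => []
  | .pre a p => [(a, p)]
  | .choice p q => der p ++ der q

@[simp] lemma step_sig_iff {Act : Type} (l : List (Act × Proc Act)) (a : Act) (r : Proc Act) :
    Proc.Step (sig l) a r ↔ (a, r) ∈ l := by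
  induction l with
  | nil => simp [sig]
  | cons x l ih =>
      simp [sig, ih]
      constructor
      · rintro (⟨rfl, rfl⟩ | h)
        · left; rfl
        · right; exact h
      · rintro (h | h)
        · left; exact ⟨congrArg Prod.fst h, congrArg Prod.snd h⟩
        · right; exact h

@[simp] lemma step_sumL_iff {Act : Type} (L : List (Proc Act)) (a : Act) (r : Proc Act) :
    Proc.Step (sumL L) a r ↔ ∃ s ∈ L, Proc.Step s a r := by
  induction L with
  | nil => simp [sumL]
  | cons s L ih => simp [sumL, ih]

lemma step_iff_der {Act : Type} {p : Proc Act} {a : Act} {r : Proc Act} :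
    Proc.Step p a r ↔ (a, r) ∈ der p := by
  induction p with
  | nil => simp [der]
  | pre b s => simp [der, Prod.ext_iff]
  | choice u v ihu ihv => simp [der, ihu, ihv]

lemma step_size {Act : Type} {p : Proc Act} {a : Act} {r : Proc Act}
    (h : Proc.Step p a r) : sizeOf r < sizeOf p := by
  induction h with
  | pre a p => simp
  | left q _ ih => simp; omega
  | right p _ ih => simp; omega

end Stmt19Aux

open Stmt19Aux

/-- if `⊑` (here `R`) is a behavior preorder (weaker than
bisimilarity and a precongruence w.r.t. prefix and choice) such that
(i) `I(p) = I(q)` implies `p ⊑ p + q`, and (ii) `p ⊑ q` implies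
`I(p) = I(q)`, then `p ⊑ q` iff there is an `I`-simulation up-to `⊑`
relating `p` to `q`. -/
theorem stmt19 {Act : Type} (R : Proc Act → Proc Act → Prop)
    (hrefl : ∀ p, R p p)
    (htrans : ∀ p q r, R p q → R q r → R p r)
    (hbisim : ∀ p q, Bisimilar p q → R p q)
    (hpre : ∀ (a : Act) (p q : Proc Act), R p q → R (Proc.pre a p) (Proc.pre a q))
    (hadd : ∀ p q r : Proc Act, R p q → R (Proc.choice p r) (Proc.choice q r))
    (hRS : ∀ p q : Proc Act, Proc.initials p = Proc.initials q →
      R p (Proc.choice p q))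
    (hI : ∀ p q : Proc Act, R p q → Proc.initials p = Proc.initials q)
    (p q : Proc Act) :
    R p q ↔ ∃ S, IsISimUpTo R S ∧ S p q := by
  constructor
  · intro h
    exact ⟨R, fun p q hpq => ⟨hI p q hpq, fun a p' hs => ⟨p, p', hpq, hs, hrefl p'⟩⟩, h⟩
  · rintro ⟨S, hSim, hpq⟩
    have hbisimR : ∀ u v : Proc Act, (∀ a r, Proc.Step u a r ↔ Proc.Step v a r) → R u v :=
      fun u v h => hbisim u v (bisim_of_same_steps h)
    have haddR : ∀ r x y : Proc Act, R x y → R (Proc.choice r x) (Proc.choice r y) := by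
      intro r x y h
      have e1 : R (Proc.choice r x) (Proc.choice x r) := hbisimR _ _ (by intro a s; simp; tauto)
      have e3 : R (Proc.choice y r) (Proc.choice r y) := hbisimR _ _ (by intro a s; simp; tauto)
      exact htrans _ _ _ e1 (htrans _ _ _ (hadd _ _ _ h) e3)
    have memfst : ∀ (l : List (Act × Proc Act)) (a : Act),
        (∃ r, (a, r) ∈ l) ↔ a ∈ l.map Prod.fst := by
      intro l a
      simp only [List.mem_map]
      constructor
      · rintro ⟨r, hr⟩; exact ⟨(a, r), hr, rfl⟩
      · rintro ⟨⟨b, r⟩, h, rfl⟩; exact ⟨r, h⟩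
    have key : ∀ n (p q : Proc Act), sizeOf p < n → S p q → R p q := by
      intro n
      induction n with
      | zero => intro p q h; omega
      | succ n ih =>
        intro p q hsz hS
        obtain ⟨hIpq, hstep⟩ := hSim p q hS
        have hx : ∀ x ∈ der p, ∃ q' q'', R q' q ∧ Proc.Step q' x.1 q'' ∧ R x.2 q'' := by
          rintro ⟨a, p'⟩ hxmem
          have hst : Proc.Step p a p' := step_iff_der.mpr hxmem
          obtain ⟨q', q'', h1, h2, h3⟩ := hstep a p' hst
          have : sizeOf p' < sizeOf p := step_size hst
          exact ⟨q', q'', h1, h2, ih p' q'' (by omega) h3⟩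
        have lemA : ∀ l : List (Act × Proc Act),
            (∀ x ∈ l, ∃ q' q'', R q' q ∧ Proc.Step q' x.1 q'' ∧ R x.2 q'') →
            ∃ m : List (Act × Proc Act × Proc Act),
              m.map Prod.fst = l.map Prod.fst ∧
              (∀ t ∈ m, R t.2.1 q ∧ Proc.Step t.2.1 t.1 t.2.2) ∧
              R (sig l) (sig (m.map fun t => (t.1, t.2.2))) := by
          intro l
          induction l with
          | nil => exact fun _ => ⟨[], rfl, by simp, hrefl _⟩
          | cons x l ihl =>
            intro hall
            obtain ⟨q', q'', h1, h2, h3⟩ := hall x (by simp)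
            obtain ⟨m, hm1, hm2, hm3⟩ := ihl (fun y hy => hall y (by simp [hy]))
            refine ⟨(x.1, q', q'') :: m, by simp [hm1], ?_, ?_⟩
            · intro t ht
              rcases List.mem_cons.mp ht with rfl | ht
              · exact ⟨h1, h2⟩
              · exact hm2 t ht
            · show R (Proc.choice (Proc.pre x.1 x.2) (sig l))
                (Proc.choice (Proc.pre x.1 q'') (sig (m.map fun t => (t.1, t.2.2))))
              exact htrans _ _ _ (hadd _ _ _ (hpre x.1 _ _ h3)) (haddR _ _ _ hm3)
        obtain ⟨m, hm1, hm2, hm3⟩ := lemA (der p) hx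
        set T := sig (m.map fun t => (t.1, t.2.2)) with hT
        set V := sumL (m.map fun t => t.2.1) with hV
        have r1 : R p (sig (der p)) :=
          hbisimR _ _ (fun a r => by rw [step_iff_der, step_sig_iff])
        have hIT : Proc.initials T = Proc.initials p := by
          ext a
          show (∃ r, Proc.Step T a r) ↔ (∃ r, Proc.Step p a r)
          rw [exists_congr (fun r => (step_iff_der (p := p) (a := a) (r := r)))]
          simp only [hT, step_sig_iff]
          rw [memfst, memfst, List.map_map, ← hm1]
          rfl
        have hIqV : Proc.initials (Proc.choice q V) = Proc.initials q := by
          ext a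
          simp only [Proc.initials, Set.mem_setOf_eq, step_choice_iff, hV, step_sumL_iff,
            List.mem_map]
          constructor
          · rintro ⟨r, (h | ⟨s, ⟨t, ht, rfl⟩, hs⟩)⟩
            · exact ⟨r, h⟩
            · have heq := hI _ _ (hm2 t ht).1
              have hmem : a ∈ Proc.initials t.2.1 := ⟨r, hs⟩
              rw [heq] at hmem
              exact hmem
          · rintro ⟨r, h⟩; exact ⟨r, Or.inl h⟩
        have r3 : R T (Proc.choice T (Proc.choice q V)) :=
          hRS T _ ((hIT.trans hIpq).trans hIqV.symm)
        have hTV : ∀ a r, Proc.Step T a r → Proc.Step V a r := by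
          intro a r h
          rw [hT, step_sig_iff, List.mem_map] at h
          obtain ⟨t, ht, heq⟩ := h
          rw [hV, step_sumL_iff]
          refine ⟨t.2.1, List.mem_map.mpr ⟨t, ht, rfl⟩, ?_⟩
          have hs := (hm2 t ht).2
          injection heq with e1 e2
          rw [← e1, ← e2]
          exact hs
        have r4 : R (Proc.choice T (Proc.choice q V)) (Proc.choice q V) := by
          apply hbisimR
          intro a r
          simp only [step_choice_iff]
          constructor
          · rintro (h | h)
            · exact Or.inr (hTV a r h)
            · exact h
          · exact Or.inr
        have r5 : ∀ L : List (Proc Act), (∀ s ∈ L, R s q) → R (Proc.choice q (sumL L)) q := by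
          intro L
          induction L with
          | nil =>
            exact fun _ => hbisimR _ _ (by intro a r; simp [sumL])
          | cons s L ihL =>
            intro h
            have e1 : R (Proc.choice q (sumL (s :: L))) (Proc.choice s (Proc.choice q (sumL L))) :=
              hbisimR _ _ (by intro a r; simp [sumL]; tauto)
            have e2 : R (Proc.choice s (Proc.choice q (sumL L))) (Proc.choice q (Proc.choice q (sumL L))) :=
              hadd _ _ _ (h s (by simp))
            have e3 : R (Proc.choice q (Proc.choice q (sumL L))) (Proc.choice q (sumL L)) :=
              hbisimR _ _ (by intro a r; simp)
            exact htrans _ _ _ e1 (htrans _ _ _ e2 (htrans _ _ _ e3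
              (ihL fun s hs => h s (by simp [hs]))))
        have r5' : R (Proc.choice q V) q := r5 _ (fun s hs => by
          rw [List.mem_map] at hs
          obtain ⟨t, ht, rfl⟩ := hs
          exact (hm2 t ht).1)
        exact htrans _ _ _ r1 (htrans _ _ _ hm3 (htrans _ _ _ r3 (htrans _ _ _ r4 r5')))
    exact key (sizeOf p + 1) p q (by omega) hpq
end
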